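/- Iterating the constraint-violation bound: if y⁰ satisfies the exact constraint ((∇y⁰)ᵀ∇y⁰ = I₂ at a point) and each step satisfies the linearized constraint with increments dᵏ, then after K steps |(∇yᴷ)ᵀ∇yᴷ − I₂| ≤ τ² Σ_{k=1}^{K} |∇dᵏ|², so if additionally Σ_k |∇dᵏ|² ≤ C/τ (as follows from an energy bound Σ_k τ‖dᵏ‖² ≤ C), the total violation is ≤ Cτ, independent of K. -/

import Mathlib

open Matrix

/-- Frobenius norm of a real matrix. -/
noncomputable def frobNorm {m n : Type*} [Fintype m] [Fintype n]
    (M : Matrix m n ℝ) : ℝ :=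
  Real.sqrt (∑ i, ∑ j, (M i j) ^ 2)

/-!
Under the linearized constraint `Dᵀ Y + Yᵀ D = 0` the first-order term of the Gram matrix of
`Y + τ D` vanishes, so each step changes `Yᵀ Y` by exactly `τ² Dᵀ D`. Telescoping from the exact
constraint `Y⁰ᵀ Y⁰ = I` writes the violation after `K` steps as `τ² Σₖ Dₖᵀ Dₖ`, and the Frobenius
norm is submultiplicative and invariant under transposition.
-/

section Gram

variable {R : Type*} [CommRing R] {m n : Type*} [Fintype m]

theorem transpose_mul_self_add_smul_of_linearized (τ : R) {Y D : Matrix m n R}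
    (hlin : Dᵀ * Y + Yᵀ * D = 0) :
    (Y + τ • D)ᵀ * (Y + τ • D) = Yᵀ * Y + τ ^ 2 • (Dᵀ * D) := by
  have expand : (Y + τ • D)ᵀ * (Y + τ • D) =
      Yᵀ * Y + τ • (Dᵀ * Y + Yᵀ * D) + τ ^ 2 • (Dᵀ * D) := by
    simp only [transpose_add, transpose_smul, Matrix.add_mul, Matrix.mul_add, Matrix.smul_mul,
      Matrix.mul_smul, smul_smul, smul_add, sq]
    abel
  rw [expand, hlin, smul_zero, add_zero]

theorem transpose_mul_self_sub_eq_sum_of_linearized (τ : R) (K : ℕ) (Y D : ℕ → Matrix m n R)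
    (hstep : ∀ k, 1 ≤ k → k ≤ K → Y k = Y (k - 1) + τ • D k)
    (hlin : ∀ k, 1 ≤ k → k ≤ K → (D k)ᵀ * Y (k - 1) + (Y (k - 1))ᵀ * D k = 0) :
    (Y K)ᵀ * Y K - (Y 0)ᵀ * Y 0 = τ ^ 2 • ∑ k ∈ Finset.Icc 1 K, (D k)ᵀ * D k := by
  induction K with
  | zero => simp
  | succ K ih =>
    have prev := ih (fun k h1 h2 => hstep k h1 (by omega)) (fun k h1 h2 => hlin k h1 (by omega))
    have step := hstep (K + 1) (by omega) le_rfl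
    have lin := hlin (K + 1) (by omega) le_rfl
    rw [Nat.add_sub_cancel] at step lin
    rw [step, transpose_mul_self_add_smul_of_linearized τ lin,
      Finset.sum_Icc_succ_top (by omega), smul_add, ← prev]
    abel

end Gram

section Frobenius

attribute [local instance] Matrix.frobeniusNormedAddCommGroup Matrix.frobeniusNormedSpace

variable {m n : Type*} [Fintype m] [Fintype n]

theorem frobNorm_eq_norm (M : Matrix m n ℝ) : frobNorm M = ‖M‖ := by
  rw [Matrix.frobenius_norm_def, frobNorm, Real.sqrt_eq_rpow]
  simp [sq_abs]

theorem norm_transpose_mul_self_le (M : Matrix m n ℝ) : ‖Mᵀ * M‖ ≤ ‖M‖ ^ 2 := by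
  simpa [Matrix.frobenius_norm_transpose, sq] using Matrix.frobenius_norm_mul Mᵀ M

theorem frobNorm_smul_sum_transpose_mul_self_le {ι : Type*} (s : Finset ι) (τ : ℝ)
    (D : ι → Matrix m n ℝ) :
    frobNorm (τ ^ 2 • ∑ k ∈ s, (D k)ᵀ * D k) ≤ τ ^ 2 * ∑ k ∈ s, frobNorm (D k) ^ 2 := by
  simp only [frobNorm_eq_norm]
  rw [norm_smul, Real.norm_eq_abs, abs_of_nonneg (sq_nonneg τ)]
  gcongr
  calc ‖∑ k ∈ s, (D k)ᵀ * D k‖ ≤ ∑ k ∈ s, ‖(D k)ᵀ * D k‖ := norm_sum_le _ _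
    _ ≤ ∑ k ∈ s, ‖D k‖ ^ 2 := Finset.sum_le_sum fun k _ => norm_transpose_mul_self_le (D k)

end Frobenius

theorem iterated_constraint_violation
    (τ : ℝ) (hτ : 0 < τ) (K : ℕ)
    (Y D : ℕ → Matrix (Fin 3) (Fin 2) ℝ)
    (hstep : ∀ k, 1 ≤ k → k ≤ K → Y k = Y (k - 1) + τ • D k)
    (hlin : ∀ k, 1 ≤ k → k ≤ K → (D k)ᵀ * Y (k - 1) + (Y (k - 1))ᵀ * D k = 0)
    (h0 : (Y 0)ᵀ * Y 0 = 1) :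
    frobNorm ((Y K)ᵀ * Y K - 1) ≤ τ ^ 2 * ∑ k ∈ Finset.Icc 1 K, (frobNorm (D k)) ^ 2 ∧
    ∀ C : ℝ, (∑ k ∈ Finset.Icc 1 K, (frobNorm (D k)) ^ 2 ≤ C / τ) →
      frobNorm ((Y K)ᵀ * Y K - 1) ≤ C * τ := by
  have violation : frobNorm ((Y K)ᵀ * Y K - 1) ≤
      τ ^ 2 * ∑ k ∈ Finset.Icc 1 K, frobNorm (D k) ^ 2 := by
    rw [← h0, transpose_mul_self_sub_eq_sum_of_linearized τ K Y D hstep hlin]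
    exact frobNorm_smul_sum_transpose_mul_self_le _ τ D
  refine ⟨violation, fun C hC => ?_⟩
  calc frobNorm ((Y K)ᵀ * Y K - 1)
      ≤ τ ^ 2 * (C / τ) := violation.trans (by gcongr)
    _ = C * τ := by field_simp
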